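/- First-order perturbation of a projection: let B(t) be a differentiable matrix-valued function of a real parameter with B(t₀) of full column rank, and let P(t) be the orthogonal projection onto the column space of B(t). Then P'(t₀) = P⊥ B' B⁺ + (P⊥ B' B⁺)ᴴ, where P⊥ = I − P(t₀) and B⁺ = (BᴴB)⁻¹Bᴴ evaluated at t₀. -/

import Mathlib

/-!
With `G = BᴴB` we have `P = B G⁻¹ Bᴴ`. Full column rank makes `G(t₀)` invertible, so the
product rule and `(G⁻¹)' = -G⁻¹ G' G⁻¹` give
`P' = B' G⁻¹ Bᴴ - B G⁻¹ (B'ᴴ B + Bᴴ B') G⁻¹ Bᴴ + B G⁻¹ B'ᴴ`,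
which regroups as `P⊥ B' B⁺ + (P⊥ B' B⁺)ᴴ` because `G⁻¹` is Hermitian.
-/

open Matrix

variable {𝕜 : Type*} [RCLike 𝕜] {m n p : Type*}

def HasEntrywiseDerivAt (A : ℝ → Matrix m n 𝕜) (A' : Matrix m n 𝕜) (t : ℝ) : Prop :=
  ∀ i j, HasDerivAt (fun s => A s i j) (A' i j) t

namespace HasEntrywiseDerivAt

variable {A : ℝ → Matrix m n 𝕜} {A' : Matrix m n 𝕜} {t : ℝ}

theorem mul [Fintype n] {C : ℝ → Matrix n p 𝕜} {C' : Matrix n p 𝕜}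
    (hA : HasEntrywiseDerivAt A A' t) (hC : HasEntrywiseDerivAt C C' t) :
    HasEntrywiseDerivAt (fun s => A s * C s) (A' * C t + A t * C') t := fun i j => by
  simpa only [mul_apply, Matrix.add_apply, ← Finset.sum_add_distrib] using
    HasDerivAt.fun_sum fun k _ => (hA i k).fun_mul (hC k j)

theorem conjTranspose (hA : HasEntrywiseDerivAt A A' t) :
    HasEntrywiseDerivAt (fun s => (A s)ᴴ) A'ᴴ t := fun i j => (hA j i).star

end HasEntrywiseDerivAt

section LinftyOpNorm

/- The operator norm only serves to make square matrices a complete normed algebra, where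
inversion is differentiable (`hasFDerivAt_ringInverse`). -/
attribute [local instance] Matrix.linftyOpNormedAddCommGroup Matrix.linftyOpNormedSpace
  Matrix.linftyOpNormedRing Matrix.linftyOpNormedAlgebra Matrix.linftyOpIsBoundedSMul

variable [Fintype m] [Fintype n]

theorem hasEntrywiseDerivAt_iff_hasDerivAt {A : ℝ → Matrix m n 𝕜} {A' : Matrix m n 𝕜} {t : ℝ} :
    HasEntrywiseDerivAt A A' t ↔ HasDerivAt A A' t := by
  classical
  constructor
  · intro h
    have hsum := HasDerivAt.fun_sum (u := Finset.univ) (x := t) fun i _ =>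
      HasDerivAt.fun_sum (u := Finset.univ) fun j _ => (h i j).smul_const (single i j (1 : 𝕜))
    simp only [smul_single, smul_eq_mul, mul_one, ← matrix_eq_sum_single] at hsum
    exact hsum
  · intro h i j
    let entry : Matrix m n 𝕜 →L[ℝ] 𝕜 :=
      { toLinearMap := entryLinearMap ℝ 𝕜 i j
        cont := (continuous_apply j).comp (continuous_apply i) }
    exact entry.hasFDerivAt.comp_hasDerivAt t h

theorem HasEntrywiseDerivAt.inv [DecidableEq n] {G : ℝ → Matrix n n 𝕜} {G' : Matrix n n 𝕜}
    {t : ℝ} (hG : HasEntrywiseDerivAt G G' t) (hunit : IsUnit (G t)) :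
    HasEntrywiseDerivAt (fun s => (G s)⁻¹) (-((G t)⁻¹ * G' * (G t)⁻¹)) t := by
  rw [hasEntrywiseDerivAt_iff_hasDerivAt] at hG ⊢
  obtain ⟨u, hu⟩ := hunit
  have hinv : HasFDerivAt Ring.inverse _ (G t) := hu ▸ hasFDerivAt_ringInverse (𝕜 := ℝ) u
  simp only [nonsing_inv_eq_ringInverse]
  refine (hinv.comp_hasDerivAt t hG).congr_deriv ?_
  simp [← hu]

end LinftyOpNorm

variable [Fintype m] [Fintype n]

theorem Matrix.isUnit_of_rank_eq_card {K : Type*} [Field K] [DecidableEq n] {A : Matrix n n K}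
    (h : A.rank = Fintype.card n) : IsUnit A := by
  rw [← mulVec_surjective_iff_isUnit, ← coe_mulVecLin, ← LinearMap.range_eq_top]
  apply Submodule.eq_top_of_finrank_eq
  rw [← rank, h, Module.finrank_fintype_fun_eq_card]

open scoped ComplexOrder in
theorem Matrix.isUnit_conjTranspose_mul_self [DecidableEq n] {A : Matrix m n 𝕜}
    (h : A.rank = Fintype.card n) : IsUnit (Aᴴ * A) :=
  isUnit_of_rank_eq_card (by rw [rank_conjTranspose_mul_self, h])

theorem Matrix.projection_deriv_eq {R : Type*} [CommRing R] [StarRing R] [DecidableEq m]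
    (B B' : Matrix m n R) (F : Matrix n n R) (hF : Fᴴ = F) :
    (B' * F + B * -(F * (B'ᴴ * B + Bᴴ * B') * F)) * Bᴴ + B * F * B'ᴴ =
      (1 - B * F * Bᴴ) * B' * (F * Bᴴ) + ((1 - B * F * Bᴴ) * B' * (F * Bᴴ))ᴴ := by
  simp only [conjTranspose_mul, conjTranspose_sub, conjTranspose_one,
    conjTranspose_conjTranspose, hF]
  simp only [Matrix.mul_add, Matrix.add_mul, Matrix.sub_mul, Matrix.mul_sub, Matrix.mul_neg,
    Matrix.neg_mul, Matrix.one_mul, Matrix.mul_one, Matrix.mul_assoc]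
  abel

theorem HasEntrywiseDerivAt.projection [DecidableEq m] [DecidableEq n] {B : ℝ → Matrix m n 𝕜}
    {B' : Matrix m n 𝕜} {t : ℝ} (hB : HasEntrywiseDerivAt B B' t)
    (hrank : (B t).rank = Fintype.card n) :
    HasEntrywiseDerivAt (fun s => B s * ((B s)ᴴ * B s)⁻¹ * (B s)ᴴ)
      ((1 - B t * ((B t)ᴴ * B t)⁻¹ * (B t)ᴴ) * B' * (((B t)ᴴ * B t)⁻¹ * (B t)ᴴ) +
        ((1 - B t * ((B t)ᴴ * B t)⁻¹ * (B t)ᴴ) * B' * (((B t)ᴴ * B t)⁻¹ * (B t)ᴴ))ᴴ) t := by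
  have hGinv := (hB.conjTranspose.mul hB).inv (isUnit_conjTranspose_mul_self hrank)
  have hGinvH : (((B t)ᴴ * B t)⁻¹)ᴴ = ((B t)ᴴ * B t)⁻¹ := by
    rw [conjTranspose_nonsing_inv, conjTranspose_mul, conjTranspose_conjTranspose]
  rw [← projection_deriv_eq _ _ _ hGinvH]
  exact (hB.mul hGinv).mul hB.conjTranspose

/-- First-order perturbation of an orthogonal projection: if `B(t)` is
differentiable with `B(t₀)` of full column rank, and
`P(t) = B(t)(B(t)ᴴB(t))⁻¹B(t)ᴴ` is the projection onto the columns of `B(t)`,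
then `P'(t₀) = P⊥ B' B⁺ + (P⊥ B' B⁺)ᴴ` with `P⊥ = I − P(t₀)` and
`B⁺ = (BᴴB)⁻¹Bᴴ` at `t₀`. -/
theorem stmt10 (N L : ℕ) (B : ℝ → Matrix (Fin N) (Fin L) ℂ)
    (B' : Matrix (Fin N) (Fin L) ℂ) (t₀ : ℝ)
    (hderiv : ∀ i j, HasDerivAt (fun t => B t i j) (B' i j) t₀)
    (hrank : (B t₀).rank = L)
    (P : ℝ → Matrix (Fin N) (Fin N) ℂ)
    (hP : ∀ t, P t = B t * ((B t)ᴴ * B t)⁻¹ * (B t)ᴴ)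
    (Bplus : Matrix (Fin L) (Fin N) ℂ)
    (hBplus : Bplus = ((B t₀)ᴴ * B t₀)⁻¹ * (B t₀)ᴴ)
    (Pperp : Matrix (Fin N) (Fin N) ℂ) (hPperp : Pperp = 1 - P t₀) :
    ∀ i j, HasDerivAt (fun t => P t i j)
      ((Pperp * B' * Bplus + (Pperp * B' * Bplus)ᴴ) i j) t₀ := by
  obtain rfl : P = fun t => B t * ((B t)ᴴ * B t)⁻¹ * (B t)ᴴ := funext hP
  subst hBplus hPperp
  exact HasEntrywiseDerivAt.projection hderiv (by rw [hrank, Fintype.card_fin])
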